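/- Let ε, δ ∈ (0,1), let n ≥ 1 be a natural number, and set b = 1 + (εδ)². Let C be distributed according to morris(b, n) and let ñ = (b^C − b)/(b − 1) + 1. Then P(|ñ − n| > εn) ≤ δ. -/

import Mathlib

/-!
The one-step recursion of `morris` shows that a function `f` of the counter gains, per increment,
the expected drift `b ^ (-c) * (f (c + 1) - f c)`. For `f c = b ^ c` this drift is the constant
`b - 1`, and for `f c = (b ^ c) ^ 2` it is `(b ^ 2 - 1) * b ^ c`; hence `E[b ^ C] = 1 + n (b - 1)`,
so that `ñ` is unbiased, and `Var[b ^ C] = (b - 1) ^ 3 * choose n 2`. Chebyshev's inequality then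
bounds the failure probability by `(b - 1) (n - 1) / (2 ε ^ 2 n) ≤ δ ^ 2 / 2`.
-/

open scoped ENNReal
open MeasureTheory

/-- A coin flip returning `true` with probability `min p 1`. -/
noncomputable def coin (p : ℝ≥0∞) : PMF Bool := PMF.bernoulli (min p 1).toNNReal
  (by simpa using ENNReal.toNNReal_mono ENNReal.one_ne_top (min_le_right p 1))

/-- The Morris counter distribution with base `b` after `n` increments: starting from `0`,
each increment raises a counter `c` to `c + 1` with probability `b ^ (-c)`. -/
noncomputable def morris (b : ℝ) : ℕ → PMF ℕ
  | 0 => PMF.pure 0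
  | n + 1 => (morris b n).bind fun c =>
      (coin (ENNReal.ofReal (b ^ (-(c : ℝ))))).bind fun h =>
        PMF.pure (if h then c + 1 else c)

open ProbabilityTheory

namespace PMF

variable {α β : Type*} [MeasurableSpace α] [MeasurableSingletonClass α] [Countable α]
  [MeasurableSpace β]

theorem toMeasure_bind_eq_bind (p : PMF α) (k : α → PMF β) :
    (p.bind k).toMeasure = p.toMeasure.bind fun a => (k a).toMeasure := by
  ext s hs
  rw [Measure.bind_apply hs (measurable_of_countable _).aemeasurable, toMeasure_bind_apply _ _ _ hs,
    lintegral_countable']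
  simp_rw [toMeasure_apply_singleton p _ (measurableSet_singleton _), mul_comm]

theorem lintegral_bind (p : PMF α) (k : α → PMF β) {f : β → ℝ≥0∞} (hf : Measurable f) :
    ∫⁻ y, f y ∂(p.bind k).toMeasure = ∫⁻ x, ∫⁻ y, f y ∂(k x).toMeasure ∂p.toMeasure := by
  rw [toMeasure_bind_eq_bind, Measure.lintegral_bind (measurable_of_countable _).aemeasurable
    hf.aemeasurable]

end PMF

theorem coin_apply_of_le_one {p : ℝ≥0∞} (hp : p ≤ 1) (h : Bool) :
    coin p h = cond h p (1 - p) := by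
  have hp' : p ≠ ⊤ := ne_top_of_le_ne_top ENNReal.one_ne_top hp
  cases h
  · change (((1 - (min p 1).toNNReal : NNReal)) : ℝ≥0∞) = 1 - p
    rw [min_eq_left hp, ENNReal.coe_sub, ENNReal.coe_toNNReal hp', ENNReal.coe_one]
  · change (((min p 1).toNNReal : NNReal) : ℝ≥0∞) = p
    rw [min_eq_left hp, ENNReal.coe_toNNReal hp']

theorem lintegral_coin_ofReal {q : ℝ} (hq0 : 0 ≤ q) (hq1 : q ≤ 1) {g : Bool → ℝ} (hg : 0 ≤ g) :
    ∫⁻ h, ENNReal.ofReal (g h) ∂(coin (ENNReal.ofReal q)).toMeasure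
      = ENNReal.ofReal (q * g true + (1 - q) * g false) := by
  rw [lintegral_fintype, Fintype.sum_bool]
  simp only [PMF.toMeasure_apply_singleton _ _ (measurableSet_singleton _),
    coin_apply_of_le_one (ENNReal.ofReal_le_one.2 hq1), cond_true, cond_false]
  rw [← ENNReal.ofReal_one, ← ENNReal.ofReal_sub _ hq0, ← ENNReal.ofReal_mul (hg _),
    ← ENNReal.ofReal_mul (hg _), ← ENNReal.ofReal_add (mul_nonneg (hg _) hq0)
      (mul_nonneg (hg _) (by linarith)), mul_comm q, mul_comm (1 - q)]

theorem rpow_neg_natCast_mul_pow {b : ℝ} (hb : 0 < b) (c : ℕ) : b ^ (-(c : ℝ)) * b ^ c = 1 := by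
  rw [Real.rpow_neg hb.le, Real.rpow_natCast, inv_mul_cancel₀ (by positivity)]

theorem integral_eq_of_lintegral_ofReal_eq {α : Type*} [MeasurableSpace α] {μ : Measure α}
    {f : α → ℝ} (hf : 0 ≤ f) (hfm : AEStronglyMeasurable f μ) {r : ℝ} (hr : 0 ≤ r)
    (h : ∫⁻ x, ENNReal.ofReal (f x) ∂μ = ENNReal.ofReal r) : ∫ x, f x ∂μ = r := by
  rw [integral_eq_lintegral_of_nonneg_ae (.of_forall hf) hfm, h, ENNReal.toReal_ofReal hr]

section Morris

variable {b : ℝ}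

theorem lintegral_morris_succ (hb : 1 ≤ b) (n : ℕ) {f : ℕ → ℝ} (hf : 0 ≤ f) :
    ∫⁻ c, ENNReal.ofReal (f c) ∂(morris b (n + 1)).toMeasure
      = ∫⁻ c, ENNReal.ofReal (f c + b ^ (-(c : ℝ)) * (f (c + 1) - f c))
          ∂(morris b n).toMeasure := by
  rw [morris, PMF.lintegral_bind _ _ (measurable_of_countable _)]
  refine lintegral_congr fun c => ?_
  have hq0 : 0 ≤ b ^ (-(c : ℝ)) := Real.rpow_nonneg (by linarith) _
  have hq1 : b ^ (-(c : ℝ)) ≤ 1 := Real.rpow_le_one_of_one_le_of_nonpos hb (by simp)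
  rw [PMF.lintegral_bind _ _ (measurable_of_countable _)]
  simp only [PMF.toMeasure_pure, lintegral_dirac]
  rw [lintegral_coin_ofReal hq0 hq1 (g := fun h => f (if h then c + 1 else c)) fun _ => hf _]
  simp only [if_true, Bool.false_eq_true, if_false]
  congr 1
  ring

theorem lintegral_morris_pow (hb : 1 ≤ b) (n : ℕ) :
    ∫⁻ c, ENNReal.ofReal (b ^ c) ∂(morris b n).toMeasure = ENNReal.ofReal (1 + n * (b - 1)) := by
  induction n with
  | zero => simp [morris, PMF.toMeasure_pure]
  | succ n ih =>
    have hdrift (c : ℕ) : ENNReal.ofReal (b ^ c + b ^ (-(c : ℝ)) * (b ^ (c + 1) - b ^ c))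
        = ENNReal.ofReal (b ^ c) + ENNReal.ofReal (b - 1) := by
      rw [← ENNReal.ofReal_add (by positivity) (sub_nonneg.2 hb)]
      congr 1
      linear_combination (b - 1) * rpow_neg_natCast_mul_pow (by linarith) c
    rw [lintegral_morris_succ hb n (f := fun c => _) fun _ => by positivity]
    simp_rw [hdrift]
    rw [lintegral_add_right _ measurable_const, lintegral_const, ih, measure_univ, mul_one,
      ← ENNReal.ofReal_add (by positivity) (sub_nonneg.2 hb)]
    congr 1
    push_cast
    ring

theorem lintegral_morris_pow_sq (hb : 1 ≤ b) (n : ℕ) :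
    ∫⁻ c, ENNReal.ofReal ((b ^ c) ^ 2) ∂(morris b n).toMeasure
      = ENNReal.ofReal (1 + n * (b ^ 2 - 1) + (b ^ 2 - 1) * (b - 1) * n.choose 2) := by
  induction n with
  | zero => simp [morris, PMF.toMeasure_pure]
  | succ n ih =>
    have hb2 : 0 ≤ b ^ 2 - 1 := by nlinarith
    have hdrift (c : ℕ) :
        ENNReal.ofReal ((b ^ c) ^ 2 + b ^ (-(c : ℝ)) * ((b ^ (c + 1)) ^ 2 - (b ^ c) ^ 2))
          = ENNReal.ofReal ((b ^ c) ^ 2) + ENNReal.ofReal (b ^ 2 - 1) * ENNReal.ofReal (b ^ c) := by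
      rw [← ENNReal.ofReal_mul hb2, ← ENNReal.ofReal_add (by positivity) (by positivity)]
      congr 1
      linear_combination (b ^ c * (b ^ 2 - 1)) * rpow_neg_natCast_mul_pow (by linarith) c
    rw [lintegral_morris_succ hb n (f := fun c => _) fun _ => by positivity]
    simp_rw [hdrift]
    rw [lintegral_add_right _ (measurable_of_countable _),
      lintegral_const_mul _ (measurable_of_countable _), ih, lintegral_morris_pow hb,
      ← ENNReal.ofReal_mul hb2, ← ENNReal.ofReal_add (by positivity)
        (mul_nonneg hb2 (by have := mul_nonneg n.cast_nonneg (sub_nonneg.2 hb); linarith))]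
    congr 1
    push_cast [Nat.cast_choose_two]
    ring

theorem memLp_morris_pow (hb : 1 ≤ b) (n : ℕ) :
    MemLp (fun c : ℕ => b ^ c) 2 (morris b n).toMeasure := by
  refine (memLp_two_iff_integrable_sq .of_discrete).2 ?_
  refine (lintegral_ofReal_ne_top_iff_integrable .of_discrete (.of_forall fun c => ?_)).1 ?_
  · positivity
  · rw [lintegral_morris_pow_sq hb]
    exact ENNReal.ofReal_ne_top

theorem integral_morris_pow (hb : 1 ≤ b) (n : ℕ) :
    ∫ c, b ^ c ∂(morris b n).toMeasure = 1 + n * (b - 1) :=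
  integral_eq_of_lintegral_ofReal_eq (fun c => by positivity) .of_discrete
    (by have := mul_nonneg n.cast_nonneg (sub_nonneg.2 hb); linarith) (lintegral_morris_pow hb n)

theorem variance_morris_pow (hb : 1 ≤ b) (n : ℕ) :
    variance (fun c : ℕ => b ^ c) (morris b n).toMeasure = (b - 1) ^ 3 * n.choose 2 := by
  have hb2 : 0 ≤ b ^ 2 - 1 := by nlinarith
  have hsq : ∫ c, (b ^ c) ^ 2 ∂(morris b n).toMeasure
      = 1 + n * (b ^ 2 - 1) + (b ^ 2 - 1) * (b - 1) * n.choose 2 :=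
    integral_eq_of_lintegral_ofReal_eq (fun c => by positivity) .of_discrete
      (by have := sub_nonneg.2 hb; positivity) (lintegral_morris_pow_sq hb n)
  rw [variance_eq_sub (memLp_morris_pow hb n)]
  simp only [Pi.pow_apply]
  rw [hsq, integral_morris_pow hb, Nat.cast_choose_two]
  ring

end Morris

theorem stmt_12_general (ε δ : ℝ) (hε0 : 0 < ε) (hδ0 : 0 < δ) (hδ1 : δ < 1)
    (n : ℕ) (hn : 1 ≤ n) (b : ℝ) (hb : b = 1 + (ε * δ) ^ 2) :
    (morris b n).toMeasure
      {c : ℕ | ε * n < |((b ^ c - b) / (b - 1) + 1) - n|}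
      ≤ ENNReal.ofReal δ := by
  have hb1 : b - 1 = (ε * δ) ^ 2 := by rw [hb]; ring
  have hb1_pos : 0 < b - 1 := by rw [hb1]; positivity
  have hb_ge : 1 ≤ b := by linarith
  have hdev : {c : ℕ | ε * n < |((b ^ c - b) / (b - 1) + 1) - n|}
      ⊆ {c | ε * n * (b - 1) ≤ |b ^ c - ∫ c, b ^ c ∂(morris b n).toMeasure|} := by
    intro c hc
    have hrescale : (b ^ c - b) / (b - 1) + 1 - n = (b ^ c - (1 + n * (b - 1))) / (b - 1) := by
      field_simp
      ring
    rw [Set.mem_ofPred_eq, hrescale, abs_div, abs_of_pos hb1_pos, lt_div_iff₀ hb1_pos] at hc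
    rw [Set.mem_ofPred_eq, integral_morris_pow hb_ge]
    exact hc.le
  calc _ ≤ _ := measure_mono hdev
    _ ≤ ENNReal.ofReal ((b - 1) ^ 3 * n.choose 2 / (ε * n * (b - 1)) ^ 2) := by
      rw [← variance_morris_pow hb_ge]
      exact meas_ge_le_variance_div_sq (memLp_morris_pow hb_ge n) (by positivity)
    _ ≤ ENNReal.ofReal δ := by
      refine ENNReal.ofReal_le_ofReal ?_
      have hδn : δ * (n - 1) / 2 ≤ n := by nlinarith
      rw [div_le_iff₀ (by positivity), Nat.cast_choose_two, hb1]
      calc ((ε * δ) ^ 2) ^ 3 * (n * (n - 1) / 2) = ε ^ 6 * δ ^ 5 * n * (δ * (n - 1) / 2) := by ring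
        _ ≤ ε ^ 6 * δ ^ 5 * n * n := by gcongr
        _ = δ * (ε * n * (ε * δ) ^ 2) ^ 2 := by ring

/-- For `ε, δ ∈ (0,1)`, `n ≥ 1`, and base `b = 1 + (εδ)²`: if `C ~ morris(b, n)` and
`ñ = (b^C - b)/(b - 1) + 1`, then `P(|ñ - n| > ε n) ≤ δ`. -/
theorem stmt_12 (ε δ : ℝ) (hε0 : 0 < ε) (hε1 : ε < 1) (hδ0 : 0 < δ) (hδ1 : δ < 1)
    (n : ℕ) (hn : 1 ≤ n) (b : ℝ) (hb : b = 1 + (ε * δ) ^ 2) :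
    (morris b n).toMeasure
      {c : ℕ | ε * n < |((b ^ c - b) / (b - 1) + 1) - n|}
      ≤ ENNReal.ofReal δ :=
  stmt_12_general ε δ hε0 hδ0 hδ1 n hn b hb
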